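/- arXiv:2410.12175 — 4 statements merged into one kernel-verified Lean document; each statement's English description precedes it below -/
import Mathlib

section
/- For a bounded sequence of rewards (r_i) in [0,1] such that the Cesàro limit lim_{t→∞} (1/t)·Σ_{i=0}^{t-1} r_i exists and equals L, the discounted sums also converge: lim_{γ→1⁻} (1-γ)·Σ_{i=0}^{∞} γ^i·r_i = L. -/
/-!
Summation by parts turns `(1 - γ) ∑ γ^i r_i` into `(1 - γ)² ∑ (n+1) γ^n b_n`, where
`b_n = (r_0 + ⋯ + r_n) / (n+1)` is the `n+1`-st Cesàro average. The weights `(1 - γ)² (n+1) γ^n`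
are nonnegative, sum to `1`, and each tends to `0` as `γ → 1⁻`, so this weighted average of `b`
tends to `lim b = L`.
-/

open Filter Finset Set Topology

lemma hasSum_succ_mul_geometric {γ : ℝ} (hγ : ‖γ‖ < 1) :
    HasSum (fun n : ℕ => ((n : ℝ) + 1) * γ ^ n) (1 / (1 - γ) ^ 2) := by
  simpa using hasSum_choose_mul_geometric_of_norm_lt_one 1 hγ

lemma summable_succ_mul_geometric_mul_of_tendsto {b : ℕ → ℝ} {ℓ : ℝ}
    (hb : Tendsto b atTop (𝓝 ℓ)) {γ : ℝ} (hγ : ‖γ‖ < 1) :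
    Summable fun n : ℕ => ((n : ℝ) + 1) * γ ^ n * b n := by
  obtain ⟨C, hC⟩ := isBounded_iff_forall_norm_le.mp (Metric.isBounded_range_of_tendsto b hb)
  refine .of_norm_bounded ((hasSum_succ_mul_geometric hγ).summable.abs.mul_right C) fun n => ?_
  rw [norm_mul, Real.norm_eq_abs]
  exact mul_le_mul_of_nonneg_left (hC _ (mem_range_self n)) (abs_nonneg _)

lemma tsum_pow_mul_eq_one_sub_mul_tsum_pow_mul_sum_range {γ : ℝ} {r : ℕ → ℝ}
    (h : Summable fun n : ℕ => γ ^ n * ∑ i ∈ range (n + 1), r i) :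
    ∑' n : ℕ, γ ^ n * r n = (1 - γ) * ∑' n : ℕ, γ ^ n * ∑ i ∈ range (n + 1), r i := by
  set T := ∑' n : ℕ, γ ^ n * ∑ i ∈ range (n + 1), r i
  have hshift : HasSum (fun n : ℕ => γ ^ n * ∑ i ∈ range n, r i) (γ * T) := by
    rw [← hasSum_nat_add_iff' 1]
    simpa [pow_succ, mul_assoc, mul_left_comm] using h.hasSum.mul_left γ
  calc ∑' n : ℕ, γ ^ n * r n
      = ∑' n : ℕ, (γ ^ n * ∑ i ∈ range (n + 1), r i - γ ^ n * ∑ i ∈ range n, r i) :=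
        tsum_congr fun n => by rw [sum_range_succ]; ring
    _ = T - γ * T := (h.hasSum.sub hshift).tsum_eq
    _ = (1 - γ) * T := by ring

lemma abs_one_sub_sq_mul_tsum_succ_mul_geometric_mul_sub_le {b : ℕ → ℝ} {ℓ ε K γ : ℝ}
    (hbound : ∀ n : ℕ, ((n : ℝ) + 1) * |b n - ℓ| ≤ ((n : ℝ) + 1) * ε + K)
    (hγ : γ ∈ Ioo (0 : ℝ) 1) (hsum : Summable fun n : ℕ => ((n : ℝ) + 1) * γ ^ n * b n) :
    |(1 - γ) ^ 2 * ∑' n : ℕ, ((n : ℝ) + 1) * γ ^ n * b n - ℓ| ≤ ε + K * (1 - γ) := by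
  obtain ⟨hγ0, hγ1⟩ := hγ
  have hγ1' : 1 - γ ≠ 0 := by linarith
  have hw := hasSum_succ_mul_geometric (by rwa [Real.norm_of_nonneg hγ0.le])
  have hmaj : HasSum (fun n : ℕ => γ ^ n * (((n : ℝ) + 1) * ε + K))
      (ε * (1 / (1 - γ) ^ 2) + K * (1 - γ)⁻¹) := by
    refine ((hw.mul_left ε).add ((hasSum_geometric_of_lt_one hγ0.le hγ1).mul_left K)).congr_fun
      fun n => ?_
    ring
  have hdev : (1 - γ) ^ 2 * ∑' n : ℕ, ((n : ℝ) + 1) * γ ^ n * b n - ℓ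
      = (1 - γ) ^ 2 * ∑' n : ℕ, ((n : ℝ) + 1) * γ ^ n * (b n - ℓ) := by
    simp_rw [mul_sub]
    rw [hsum.tsum_sub (hw.mul_right ℓ).summable, (hw.mul_right ℓ).tsum_eq]
    field_simp
  have hnorm : ‖∑' n : ℕ, ((n : ℝ) + 1) * γ ^ n * (b n - ℓ)‖
      ≤ ε * (1 / (1 - γ) ^ 2) + K * (1 - γ)⁻¹ := by
    refine tsum_of_norm_bounded hmaj fun n => ?_
    rw [Real.norm_eq_abs, abs_mul, abs_mul, abs_of_pos (by positivity : (0 : ℝ) < n + 1),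
      abs_of_pos (pow_pos hγ0 n)]
    calc ((n : ℝ) + 1) * γ ^ n * |b n - ℓ| = γ ^ n * (((n : ℝ) + 1) * |b n - ℓ|) := by ring
      _ ≤ γ ^ n * (((n : ℝ) + 1) * ε + K) := by gcongr; exact hbound n
  rw [hdev, abs_mul, abs_of_nonneg (sq_nonneg _)]
  calc (1 - γ) ^ 2 * |∑' n : ℕ, ((n : ℝ) + 1) * γ ^ n * (b n - ℓ)|
      ≤ (1 - γ) ^ 2 * (ε * (1 / (1 - γ) ^ 2) + K * (1 - γ)⁻¹) := by gcongr; exact hnorm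
    _ = ε + K * (1 - γ) := by field_simp

theorem tendsto_one_sub_sq_mul_tsum_succ_mul_geometric_mul {b : ℕ → ℝ} {ℓ : ℝ}
    (hb : Tendsto b atTop (𝓝 ℓ)) :
    Tendsto (fun γ : ℝ => (1 - γ) ^ 2 * ∑' n : ℕ, ((n : ℝ) + 1) * γ ^ n * b n)
      (𝓝[<] 1) (𝓝 ℓ) := by
  rw [Metric.tendsto_nhds]
  intro ε hε
  obtain ⟨K, hK⟩ : ∃ K, ∀ n : ℕ, ((n : ℝ) + 1) * |b n - ℓ| ≤ ((n : ℝ) + 1) * (ε / 2) + K := by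
    obtain ⟨N, hN⟩ := Metric.tendsto_atTop.mp hb (ε / 2) (half_pos hε)
    obtain ⟨C, hC⟩ := isBounded_iff_forall_norm_le.mp
      (Metric.isBounded_range_of_tendsto _ (hb.sub_const ℓ))
    have hbC : ∀ n, |b n - ℓ| ≤ C := fun n => hC _ (mem_range_self n)
    have hC0 : 0 ≤ C := (abs_nonneg _).trans (hbC 0)
    -- beyond `N` the deviation is below `ε / 2`; the first `N` terms are absorbed into `K = N C`
    refine ⟨N * C, fun n => ?_⟩
    rcases lt_or_ge n N with hn | hn
    · have hnN : (n : ℝ) + 1 ≤ N := by exact_mod_cast hn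
      have := mul_le_mul hnN (hbC n) (abs_nonneg _) (Nat.cast_nonneg N)
      nlinarith [hε]
    · have := hN n hn
      rw [Real.dist_eq] at this
      nlinarith [mul_nonneg (Nat.cast_nonneg N) hC0]
  have hsmall : ∀ᶠ γ in 𝓝[<] (1 : ℝ), K * (1 - γ) < ε / 2 := by
    have : Tendsto (fun γ : ℝ => K * (1 - γ)) (𝓝 1) (𝓝 0) :=
      Continuous.tendsto' (by fun_prop) 1 0 (by simp)
    exact nhdsWithin_le_nhds (this (Iio_mem_nhds (half_pos hε)))
  filter_upwards [hsmall, Ioo_mem_nhdsLT one_pos] with γ hγK hγ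
  have hγn : ‖γ‖ < 1 := by rw [Real.norm_of_nonneg hγ.1.le]; exact hγ.2
  have := abs_one_sub_sq_mul_tsum_succ_mul_geometric_mul_sub_le hK hγ
    (summable_succ_mul_geometric_mul_of_tendsto hb hγn)
  rw [Real.dist_eq]
  linarith

theorem stmt_0_general (r : ℕ → ℝ) (L : ℝ)
    (hC : Filter.Tendsto (fun t : ℕ => (∑ i ∈ Finset.range t, r i) / t)
      Filter.atTop (nhds L)) :
    Filter.Tendsto (fun γ : ℝ => (1 - γ) * ∑' i : ℕ, γ ^ i * r i)
      (nhdsWithin 1 (Set.Iio 1)) (nhds L) := by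
  have hb : Tendsto (fun n : ℕ => (∑ i ∈ range (n + 1), r i) / ((n : ℝ) + 1)) atTop (𝓝 L) := by
    simpa using (tendsto_add_atTop_iff_nat 1).2 hC
  refine (tendsto_one_sub_sq_mul_tsum_succ_mul_geometric_mul hb).congr' ?_
  filter_upwards [Ioo_mem_nhdsLT (show (-1 : ℝ) < 1 by norm_num)] with γ hγ
  have hcancel : ∀ n : ℕ, ((n : ℝ) + 1) * γ ^ n * ((∑ i ∈ range (n + 1), r i) / ((n : ℝ) + 1))
      = γ ^ n * ∑ i ∈ range (n + 1), r i := fun n => by field_simp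
  have hsum := summable_succ_mul_geometric_mul_of_tendsto hb (abs_lt.2 hγ)
  simp_rw [hcancel] at hsum ⊢
  rw [tsum_pow_mul_eq_one_sub_mul_tsum_pow_mul_sum_range hsum]
  ring

/-- If the Cesàro averages of a `[0,1]`-valued sequence converge to `L`, then the
normalized discounted sums `(1-γ)·∑ γ^i r i` converge to `L` as `γ → 1⁻`. -/
theorem stmt_0 (r : ℕ → ℝ) (hr : ∀ i, r i ∈ Set.Icc (0:ℝ) 1) (L : ℝ)
    (hC : Filter.Tendsto (fun t : ℕ => (∑ i ∈ Finset.range t, r i) / t)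
      Filter.atTop (nhds L)) :
    Filter.Tendsto (fun γ : ℝ => (1 - γ) * ∑' i : ℕ, γ ^ i * r i)
      (nhdsWithin 1 (Set.Iio 1)) (nhds L) :=
  stmt_0_general r L hC
end

section
/- Suppose γ_k → 1 from below, ε_k → 0, Π is a finite nonempty set of policies, and for each policy π the function γ ↦ (1-γ)·J_γ(π) converges to A(π) as γ→1⁻. Suppose also there exists π* ∈ Π and γ̄ < 1 such that J_γ(π*) ≥ J_γ(π) for all π ∈ Π and γ ∈ [γ̄,1), and A(π*) = max_{π∈Π} A(π). If π_k ∈ Π satisfies J_{γ_k}(π_k) ≥ J_{γ_k}(π) - ε_k for all π ∈ Π, then for all sufficiently large k, A(π_k) = max_{π∈Π} A(π). -/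
/-- Approximately discount-optimal policies are eventually limit-average optimal,
given the Abel-limit relation and the existence of a Blackwell-optimal policy. -/
theorem stmt_2 {P : Type*} [Fintype P] [Nonempty P]
    (J : ℝ → P → ℝ) (A : P → ℝ)
    (γs : ℕ → ℝ) (hγmem : ∀ k, γs k ∈ Set.Ioo (0:ℝ) 1)
    (hγ : Filter.Tendsto γs Filter.atTop (nhds 1))
    (εs : ℕ → ℝ) (hεpos : ∀ k, 0 < εs k)
    (hε : Filter.Tendsto εs Filter.atTop (nhds 0))
    (hAbel : ∀ π : P, Filter.Tendsto (fun γ : ℝ => (1 - γ) * J γ π)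
      (nhdsWithin 1 (Set.Iio 1)) (nhds (A π)))
    (πstar : P) (γbar : ℝ) (hγbar : γbar < 1)
    (hBlackwell : ∀ π : P, ∀ γ ∈ Set.Ico γbar 1, J γ π ≤ J γ πstar)
    (hstar : ∀ π : P, A π ≤ A πstar)
    (πk : ℕ → P) (hπk : ∀ k, ∀ π : P, J (γs k) π - εs k ≤ J (γs k) (πk k)) :
    ∃ k₀ : ℕ, ∀ k ≥ k₀, ∀ π : P, A π ≤ A (πk k) := by
  -- a gap ε below A πstar containing no other value of A
  obtain ⟨ε, hεp, hgap⟩ : ∃ ε > (0:ℝ), ∀ π : P, A πstar - A π < ε → A π = A πstar := by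
    by_cases h : ∀ π : P, A π = A πstar
    · exact ⟨1, one_pos, fun π _ => h π⟩
    · push_neg at h
      obtain ⟨π0, hπ0⟩ := h
      set s := Finset.univ.filter (fun π : P => A π ≠ A πstar) with hs_def
      have hs : s.Nonempty := ⟨π0, by simp [hs_def, hπ0]⟩
      refine ⟨s.inf' hs (fun π => A πstar - A π), ?_, ?_⟩
      · rw [gt_iff_lt, Finset.lt_inf'_iff]
        intro π hπ
        have hne : A π ≠ A πstar := by simpa [hs_def] using hπ
        have hlt := lt_of_le_of_ne (hstar π) hne
        linarith
      · intro π hlt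
        by_contra hne
        have hmem : π ∈ s := by simp [hs_def, hne]
        have := Finset.inf'_le (fun π => A πstar - A π) hmem
        linarith
  have hcomp : Filter.Tendsto γs Filter.atTop (nhdsWithin 1 (Set.Iio 1)) :=
    tendsto_nhdsWithin_of_tendsto_nhds_of_eventually_within _ hγ
      (Filter.Eventually.of_forall fun k => (hγmem k).2)
  have hA : ∀ π : P, Filter.Tendsto (fun k => (1 - γs k) * J (γs k) π)
      Filter.atTop (nhds (A π)) := fun π => (hAbel π).comp hcomp
  set δ := ε / 3 with hδ_def
  have hδp : 0 < δ := by positivity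
  have h1 : ∀ᶠ k in Filter.atTop, ∀ π : P,
      |(1 - γs k) * J (γs k) π - A π| < δ := by
    rw [Filter.eventually_all]
    intro π
    have := Metric.tendsto_atTop.mp (hA π) δ hδp
    obtain ⟨N, hN⟩ := this
    refine Filter.eventually_atTop.mpr ⟨N, fun k hk => ?_⟩
    simpa [Real.dist_eq] using hN k hk
  have h2 : ∀ᶠ k in Filter.atTop, (1 - γs k) * εs k < δ := by
    have ht : Filter.Tendsto (fun k => (1 - γs k) * εs k) Filter.atTop (nhds 0) := by
      have := ((tendsto_const_nhds : Filter.Tendsto (fun _ : ℕ => (1:ℝ)) Filter.atTop (nhds 1)).sub hγ).mul hε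
      simpa using this
    have := Metric.tendsto_atTop.mp ht δ hδp
    obtain ⟨N, hN⟩ := this
    refine Filter.eventually_atTop.mpr ⟨N, fun k hk => ?_⟩
    have := hN k hk
    rw [Real.dist_eq, sub_zero] at this
    exact lt_of_le_of_lt (le_abs_self _) this
  obtain ⟨k₀, hk₀⟩ := Filter.eventually_atTop.mp (h1.and h2)
  refine ⟨k₀, fun k hk π => ?_⟩
  obtain ⟨h1k, h2k⟩ := hk₀ k hk
  have hpos : 0 < 1 - γs k := by linarith [(hγmem k).2]
  have hJ : J (γs k) πstar - εs k ≤ J (γs k) (πk k) := hπk k πstar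
  have hmul : (1 - γs k) * (J (γs k) πstar - εs k) ≤ (1 - γs k) * J (γs k) (πk k) :=
    mul_le_mul_of_nonneg_left hJ hpos.le
  have ha := abs_lt.mp (h1k (πk k))
  have hb := abs_lt.mp (h1k πstar)
  have hAk : A πstar - A (πk k) < ε := by
    have hexp : (1 - γs k) * (J (γs k) πstar - εs k)
        = (1 - γs k) * J (γs k) πstar - (1 - γs k) * εs k := by ring
    rw [hexp] at hmul
    have : A πstar - A (πk k) < 3 * δ := by linarith [ha.1, ha.2, hb.1, hb.2]
    linarith [this, hδ_def]
  have heq : A (πk k) = A πstar := hgap _ hAk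
  rw [heq]; exact hstar π
end

section
/- Every accepting end component of a product MDP contains an accepting simple end component (i.e., an accepting end component in which each state has exactly one enabled action). -/
/-!
Pick a state `t` of `T` in the accepting set `Acc`. Since `T` is strongly connected, growing a
backward attractor of `t` one state at a time yields a memoryless strategy `σ`, choosing one enabled
action per state, under which every state of `T` reaches `t` inside `T`. The states that `t` reaches
under `σ` are closed under `σ`, so together with `σ` they form an end component with a single
action per state; being contained in `T` and containing `t`, it is accepting for the same pair.
-/

/-- An end component of a finite MDP with transition probabilities `Δ`:
a nonempty set of states `T` with nonempty enabled action sets `act v` for `v ∈ T`,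
closed under transitions, and strongly connected. -/
def IsEC {V A : Type*} [Fintype V] [DecidableEq V]
    (Δ : V → A → V → ℝ) (T : Finset V) (act : V → Finset A) : Prop :=
  T.Nonempty ∧ (∀ v ∈ T, (act v).Nonempty) ∧
    (∀ v ∈ T, ∀ a ∈ act v, ∑ v' ∈ T, Δ v a v' = 1) ∧
    (∀ v ∈ T, ∀ w ∈ T,
      Relation.ReflTransGen
        (fun x y => x ∈ T ∧ y ∈ T ∧ ∃ a ∈ act x, 0 < Δ x a y) v w)

/-- An end component is accepting for a Rabin condition `F` if for some pair
`(Acc, Rej) ∈ F` it meets `Acc` and avoids `Rej`. -/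
def IsAccepting {V : Type*} [DecidableEq V]
    (F : Finset (Finset V × Finset V)) (T : Finset V) : Prop :=
  ∃ p ∈ F, (T ∩ p.1).Nonempty ∧ T ∩ p.2 = ∅

open Relation Finset

namespace Relation

variable {α : Type*} {r : α → α → Prop} {p : α → Prop} {a b : α}

theorem ReflTransGen.exists_step_into (h : ReflTransGen r a b) (ha : ¬ p a) (hb : p b) :
    ∃ x y, ¬ p x ∧ p y ∧ r x y := by
  induction h with
  | refl => exact absurd hb ha
  | @tail c d _ hcd ih =>
    by_cases hc : p c
    · exact ih hc
    · exact ⟨c, d, hc, hb, hcd⟩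

theorem ReflTransGen.restrict_of_closed (hp : ∀ x y, p x → r x y → p y)
    (h : ReflTransGen r a b) (ha : p a) :
    ReflTransGen (fun x y => p x ∧ p y ∧ r x y) a b := by
  revert ha
  induction h using ReflTransGen.head_induction_on with
  | refl => exact fun _ => .refl
  | head hac _ ih =>
    exact fun ha => .head ⟨ha, hp _ _ ha hac, hac⟩ (ih (hp _ _ ha hac))

end Relation

section AttractorStrategy

variable {V A : Type*} (E : V → A → V → Prop) (act : V → Finset A)

/-- `E x a y` reads: playing `a` in `x` may lead to `y`. -/
def IsAttractorStrategy (D : Finset V) (σ : V → A) (t : V) : Prop :=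
  (∀ x ∈ D, σ x ∈ act x) ∧
    ∀ x ∈ D, ReflTransGen (fun x y => x ∈ D ∧ y ∈ D ∧ E x (σ x) y) x t

variable {E act}

theorem isAttractorStrategy_singleton {t : V} {a : A} (ha : a ∈ act t) :
    IsAttractorStrategy E act {t} (fun _ => a) t :=
  ⟨fun _ hx => mem_singleton.mp hx ▸ ha, fun _ hx => mem_singleton.mp hx ▸ .refl⟩

theorem IsAttractorStrategy.update_insert [DecidableEq V] {D : Finset V} {σ : V → A}
    {t x y : V} {a : A} (hσ : IsAttractorStrategy E act D σ t) (hx : x ∉ D) (ha : a ∈ act x)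
    (hy : y ∈ D) (hxy : E x a y) :
    IsAttractorStrategy E act (insert x D) (Function.update σ x a) t := by
  obtain ⟨hσact, hσreach⟩ := hσ
  have hagree : ∀ z ∈ D, Function.update σ x a z = σ z := fun z hz =>
    Function.update_of_ne (ne_of_mem_of_not_mem hz hx) a σ
  have hmono : ∀ u v, u ∈ D ∧ v ∈ D ∧ E u (σ u) v →
      u ∈ insert x D ∧ v ∈ insert x D ∧ E u (Function.update σ x a u) v := by
    rintro u v ⟨hu, hv, huv⟩
    exact ⟨mem_insert_of_mem hu, mem_insert_of_mem hv, hagree u hu ▸ huv⟩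
  refine ⟨fun z hz => ?_, fun z hz => ?_⟩
  · rcases mem_insert.mp hz with rfl | hz
    · simpa using ha
    · exact hagree z hz ▸ hσact z hz
  · rcases mem_insert.mp hz with rfl | hz
    · exact .head ⟨mem_insert_self _ _, mem_insert_of_mem hy, by simpa using hxy⟩
        (ReflTransGen.mono hmono _ _ (hσreach y hy))
    · exact ReflTransGen.mono hmono _ _ (hσreach z hz)

theorem exists_isAttractorStrategy {T : Finset V} {t : V} (ht : t ∈ T) (hact : (act t).Nonempty)
    (hreach : ∀ x ∈ T, ReflTransGen (fun x y => x ∈ T ∧ y ∈ T ∧ ∃ a ∈ act x, E x a y) x t) :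
    ∃ σ, IsAttractorStrategy E act T σ t := by
  classical
  obtain ⟨a₀, ha₀⟩ := hact
  let good : Finset (Finset V) :=
    {D ∈ T.powerset | t ∈ D ∧ ∃ σ, IsAttractorStrategy E act D σ t}
  have hsingleton : {t} ∈ good := mem_filter.mpr
    ⟨mem_powerset.mpr (singleton_subset_iff.mpr ht), mem_singleton_self t, _,
      isAttractorStrategy_singleton ha₀⟩
  obtain ⟨D, hD, hmax⟩ := exists_max_image good card ⟨_, hsingleton⟩
  obtain ⟨hDT, htD, σ, hσ⟩ : D ⊆ T ∧ t ∈ D ∧ ∃ σ, IsAttractorStrategy E act D σ t := by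
    simpa [good] using hD
  by_cases hTD : T ⊆ D
  · exact ⟨σ, subset_antisymm hDT hTD ▸ hσ⟩
  obtain ⟨z, hzT, hzD⟩ := not_subset.mp hTD
  obtain ⟨x, y, hxD, hyD, hxT, -, a, ha, hxy⟩ :=
    (hreach z hzT).exists_step_into (p := (· ∈ D)) hzD htD
  have hlarger := hmax (insert x D) (mem_filter.mpr
    ⟨mem_powerset.mpr (insert_subset hxT hDT), mem_insert_of_mem htD, _,
      hσ.update_insert hxD ha hyD hxy⟩)
  rw [card_insert_of_notMem hxD] at hlarger
  omega

end AttractorStrategy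

theorem exists_isEC_singleton_of_isAttractorStrategy {V A : Type*} [Fintype V] [DecidableEq V]
    {Δ : V → A → V → ℝ} (hΔ : ∀ v a v', 0 ≤ Δ v a v') {T : Finset V} {act : V → Finset A}
    {σ : V → A} {t : V} (ht : t ∈ T) (hsum : ∀ v ∈ T, ∀ a ∈ act v, ∑ v' ∈ T, Δ v a v' = 1)
    (hσ : IsAttractorStrategy (fun x a y => 0 < Δ x a y) act T σ t) :
    ∃ B ⊆ T, t ∈ B ∧ IsEC Δ B (fun x => {σ x}) := by
  classical
  obtain ⟨hσact, hσreach⟩ := hσ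
  let r : V → V → Prop := fun x y => x ∈ T ∧ y ∈ T ∧ 0 < Δ x (σ x) y
  let B : Finset V := {y ∈ T | ReflTransGen r t y}
  have hBT : B ⊆ T := filter_subset _ _
  have htB : t ∈ B := mem_filter.mpr ⟨ht, .refl⟩
  have hclosed : ∀ u v, u ∈ B → r u v → v ∈ B := fun u v hu huv =>
    mem_filter.mpr ⟨huv.2.1, (mem_filter.mp hu).2.tail huv⟩
  have hlift : ∀ u v, u ∈ B → ReflTransGen r u v →
      ReflTransGen (fun x y => x ∈ B ∧ y ∈ B ∧ ∃ a ∈ ({σ x} : Finset A), 0 < Δ x a y) u v :=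
    fun u v hu huv => ReflTransGen.mono (fun x y ⟨hx, hy, hxy⟩ =>
      ⟨hx, hy, σ x, mem_singleton_self _, hxy.2.2⟩) _ _ (huv.restrict_of_closed hclosed hu)
  refine ⟨B, hBT, htB, ⟨t, htB⟩, fun _ _ => singleton_nonempty _, fun v hv a ha => ?_,
    fun v hv w hw => (hlift v t hv (hσreach v (hBT hv))).trans (hlift t w htB (mem_filter.mp hw).2)⟩
  rw [mem_singleton.mp ha, ← hsum v (hBT hv) (σ v) (hσact v (hBT hv))]
  refine sum_subset hBT fun y hyT hyB => ?_
  by_contra hne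
  exact hyB (hclosed v y hv ⟨hBT hv, hyT, lt_of_le_of_ne (hΔ _ _ _) (Ne.symm hne)⟩)

theorem stmt_6_general {V A : Type*} [Fintype V] [DecidableEq V]
    (Δ : V → A → V → ℝ) (hΔnonneg : ∀ v a v', 0 ≤ Δ v a v')
    (F : Finset (Finset V × Finset V))
    (T : Finset V) (act : V → Finset A)
    (hEC : IsEC Δ T act) (hAcc : IsAccepting F T) :
    ∃ (T' : Finset V) (act' : V → Finset A),
      T' ⊆ T ∧ (∀ v ∈ T', act' v ⊆ act v) ∧
      IsEC Δ T' act' ∧ IsAccepting F T' ∧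
      ∀ v ∈ T', (act' v).card = 1 := by
  obtain ⟨-, hact, hsum, hconn⟩ := hEC
  obtain ⟨p, hpF, ⟨t, ht⟩, hRej⟩ := hAcc
  obtain ⟨htT, htAcc⟩ := mem_inter.mp ht
  obtain ⟨σ, hσ⟩ := exists_isAttractorStrategy htT (hact t htT) fun x hx => hconn x hx t htT
  obtain ⟨B, hBT, htB, hB⟩ := exists_isEC_singleton_of_isAttractorStrategy hΔnonneg htT hsum hσ
  refine ⟨B, fun x => {σ x}, hBT, fun v hv => singleton_subset_iff.mpr (hσ.1 v (hBT hv)), hB,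
    ⟨p, hpF, ⟨t, mem_inter.mpr ⟨htB, htAcc⟩⟩, ?_⟩, fun _ _ => card_singleton _⟩
  exact subset_empty.mp (hRej ▸ inter_subset_inter_right hBT)

/-- Every accepting end component contains an accepting *simple* end component,
i.e. one in which each state has exactly one enabled action. -/
theorem stmt_6 {V A : Type*} [Fintype V] [Fintype A] [DecidableEq V] [DecidableEq A]
    (Δ : V → A → V → ℝ) (hΔnonneg : ∀ v a v', 0 ≤ Δ v a v')
    (hΔsum : ∀ v a, ∑ v' : V, Δ v a v' = 1)
    (F : Finset (Finset V × Finset V))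
    (T : Finset V) (act : V → Finset A)
    (hEC : IsEC Δ T act) (hAcc : IsAccepting F T) :
    ∃ (T' : Finset V) (act' : V → Finset A),
      T' ⊆ T ∧ (∀ v ∈ T', act' v ⊆ act v) ∧
      IsEC Δ T' act' ∧ IsAccepting F T' ∧
      ∀ v ∈ T', (act' v).card = 1 :=
  stmt_6_general Δ hΔnonneg F T act hEC hAcc
end

section
/- In a strongly connected finite directed graph, removing one outgoing edge from a vertex that has at least two outgoing edges, and then restricting to the set of vertices reachable from any fixed designated vertex that remains reachable, yields a nonempty strongly connected subgraph strictly smaller in edge count. -/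
open scoped Classical

/-- In a finite strongly connected directed graph, deleting one outgoing edge of a
vertex `s` of out-degree at least two and restricting to the vertices still reachable
from `s` yields a nonempty strongly connected subgraph with strictly fewer edges. -/
theorem stmt_7 {V : Type*} [Fintype V] [DecidableEq V]
    (E : Finset (V × V))
    (hsc : ∀ u v : V, Relation.ReflTransGen (fun x y => (x, y) ∈ E) u v)
    (s : V) (hdeg : 2 ≤ (E.filter (fun p => p.1 = s)).card)
    (e : V × V) (he : e ∈ E) (hes : e.1 = s) :
    s ∈ (Finset.univ.filter
        (fun v : V => Relation.ReflTransGen (fun x y => (x, y) ∈ E.erase e) s v)) ∧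
    (∀ u ∈ (Finset.univ.filter
        (fun v : V => Relation.ReflTransGen (fun x y => (x, y) ∈ E.erase e) s v)),
      ∀ w ∈ (Finset.univ.filter
        (fun v : V => Relation.ReflTransGen (fun x y => (x, y) ∈ E.erase e) s v)),
      Relation.ReflTransGen
        (fun x y => (x, y) ∈ (E.erase e).filter
          (fun p => Relation.ReflTransGen (fun x' y' => (x', y') ∈ E.erase e) s p.1 ∧
            Relation.ReflTransGen (fun x' y' => (x', y') ∈ E.erase e) s p.2)) u w) ∧
    ((E.erase e).filter
        (fun p => Relation.ReflTransGen (fun x' y' => (x', y') ∈ E.erase e) s p.1 ∧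
          Relation.ReflTransGen (fun x' y' => (x', y') ∈ E.erase e) s p.2)).card
      < E.card := by
  set R : V → V → Prop := fun x y => (x, y) ∈ E.erase e with hR
  -- every vertex can reach `s` avoiding `e`
  have hC : ∀ u v : V, Relation.ReflTransGen (fun x y => (x, y) ∈ E) u v →
      Relation.ReflTransGen R u v ∨ Relation.ReflTransGen R u s := by
    intro u v h
    induction h with
    | refl => exact Or.inl Relation.ReflTransGen.refl
    | @tail b c hb hbc ih =>
      rcases ih with ih | ih
      · by_cases hbe : (b, c) = e
        · rw [← hbe] at hes
          exact Or.inr (hes ▸ ih)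
        · exact Or.inl (ih.tail (Finset.mem_erase.2 ⟨hbe, hbc⟩))
      · exact Or.inr ih
  have hCs : ∀ u : V, Relation.ReflTransGen R u s := by
    intro u
    rcases hC u s (hsc u s) with h | h <;> exact h
  -- a path avoiding `e` starting from a vertex reachable from `s` stays reachable
  have hA : ∀ u w : V, Relation.ReflTransGen R u w → Relation.ReflTransGen R s u →
      Relation.ReflTransGen
        (fun x y => (x, y) ∈ (E.erase e).filter
          (fun p => Relation.ReflTransGen R s p.1 ∧ Relation.ReflTransGen R s p.2)) u w := by
    intro u w h hsu
    induction h with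
    | refl => exact Relation.ReflTransGen.refl
    | @tail b c hub hbc ih =>
      exact ih.tail (Finset.mem_filter.2 ⟨hbc, hsu.trans hub, (hsu.trans hub).tail hbc⟩)
  refine ⟨Finset.mem_filter.2 ⟨Finset.mem_univ _, Relation.ReflTransGen.refl⟩, ?_, ?_⟩
  · intro u hu w hw
    have hsu := (Finset.mem_filter.1 hu).2
    have hsw := (Finset.mem_filter.1 hw).2
    exact hA u w ((hCs u).trans hsw) hsu
  · calc ((E.erase e).filter _).card ≤ (E.erase e).card := Finset.card_filter_le _ _
      _ < E.card := Finset.card_erase_lt_of_mem he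
end
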